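/- arXiv:2410.22569 — 2 statements merged into one kernel-verified Lean document; each statement's English description precedes it below -/
import Mathlib

section
/- Let μ be a finite regular Borel measure on ℝ with inf supp μ = 0 and μ({0}) = 0. Then for every n, liminf over large t of (∫_{(-1/n,1/n)} e^{-tx} μ(dx))/(∫ e^{-2tx} μ(dx))^{1/2} ≤ μ((-1/n,1/n))^{1/2}, and consequently liminf_{t→∞} (∫ e^{-tx} μ(dx))/(∫ e^{-2tx} μ(dx))^{1/2} = 0. -/
/-!
By Cauchy–Schwarz, `∫_s e^{-tx} dμ ≤ (∫ e^{-2tx} dμ)^{1/2} μ(s)^{1/2}` for every `s` and `t ≥ 0`,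
which is the first claim. For the second, split `ℝ = (-∞, a) ∪ [a, ∞)`. The tail integral is at
most `e^{-ta} μ(ℝ)`, while for `0 < b < a` the denominator is at least `e^{-2tb} μ(-∞, b)` with
`μ(-∞, b) > 0` because `0 = inf supp μ`; so the tail part of the quotient decays like
`e^{-(a-b)t}`. The remaining part is bounded by `μ(-∞, a)^{1/2}`, which tends to `μ(-∞, 0] = 0`
as `a ↓ 0` since `μ` has no atom at `0`. Hence the full quotient even tends to `0`.
-/

open MeasureTheory Filter Topology Set Real

theorem integral_le_sqrt_integral_sq_mul_sqrt_measureReal {α : Type*} [MeasurableSpace α]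
    {μ : Measure α} [IsFiniteMeasure μ] {f : α → ℝ} (hf_nonneg : 0 ≤ᵐ[μ] f) (hf : MemLp f 2 μ) :
    ∫ x, f x ∂μ ≤ √(∫ x, f x ^ 2 ∂μ) * √(μ.real univ) := by
  have := integral_mul_le_Lp_mul_Lq_of_nonneg Real.HolderConjugate.two_two hf_nonneg
    (g := fun _ => (1 : ℝ)) (ae_of_all _ fun _ => zero_le_one) (by simpa using hf) (memLp_const 1)
  rw [sqrt_eq_rpow, sqrt_eq_rpow]
  simpa using this

section LaplaceQuotient

variable {μ : Measure ℝ}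

theorem ae_nonneg_of_measure_Iio_eq_zero (h : μ (Iio 0) = 0) : ∀ᵐ x ∂μ, 0 ≤ x := by
  rw [ae_iff]
  simp only [not_le]
  exact h

variable [IsFiniteMeasure μ]

theorem memLp_exp_mul (h0 : ∀ᵐ x ∂μ, 0 ≤ x) {c : ℝ} (hc : c ≤ 0) (p : ENNReal) :
    MemLp (fun x => exp (c * x)) p μ := by
  refine MemLp.of_bound (by fun_prop) 1 ?_
  filter_upwards [h0] with x hx
  rw [norm_of_nonneg (exp_nonneg _), exp_le_one_iff]
  exact mul_nonpos_of_nonpos_of_nonneg hc hx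

theorem integrable_exp_mul (h0 : ∀ᵐ x ∂μ, 0 ≤ x) {c : ℝ} (hc : c ≤ 0) :
    Integrable (fun x => exp (c * x)) μ :=
  memLp_one_iff_integrable.1 (memLp_exp_mul h0 hc 1)

theorem setIntegral_exp_le_sqrt_mul_sqrt (h0 : ∀ᵐ x ∂μ, 0 ≤ x) {t : ℝ} (ht : 0 ≤ t) (s : Set ℝ) :
    ∫ x in s, exp (-t * x) ∂μ ≤ √(∫ x in s, exp (-2 * t * x) ∂μ) * √(μ.real s) := by
  have hsq : ∀ x, exp (-t * x) ^ 2 = exp (-2 * t * x) := fun x => by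
    rw [sq, ← exp_add]; ring_nf
  have := integral_le_sqrt_integral_sq_mul_sqrt_measureReal (μ := μ.restrict s)
    (ae_of_all _ fun x => (exp_pos (-t * x)).le) ((memLp_exp_mul h0 (by linarith) 2).restrict s)
  simpa only [hsq, measureReal_restrict_apply_univ] using this

theorem setIntegral_exp_div_sqrt_le (h0 : ∀ᵐ x ∂μ, 0 ≤ x) {t : ℝ} (ht : 0 ≤ t) (s : Set ℝ) :
    (∫ x in s, exp (-t * x) ∂μ) / √(∫ x, exp (-2 * t * x) ∂μ) ≤ √(μ.real s) := by
  refine div_le_of_le_mul₀ (sqrt_nonneg _) (sqrt_nonneg _) ?_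
  calc ∫ x in s, exp (-t * x) ∂μ
      ≤ √(∫ x in s, exp (-2 * t * x) ∂μ) * √(μ.real s) := setIntegral_exp_le_sqrt_mul_sqrt h0 ht s
    _ ≤ √(∫ x, exp (-2 * t * x) ∂μ) * √(μ.real s) := by
      gcongr √?_ * _
      exact setIntegral_le_integral (integrable_exp_mul h0 (by linarith : -2 * t ≤ 0))
        (ae_of_all _ fun x => (exp_pos _).le)
    _ = √(μ.real s) * √(∫ x, exp (-2 * t * x) ∂μ) := mul_comm _ _

theorem liminf_setIntegral_exp_div_sqrt_le (h0 : ∀ᵐ x ∂μ, 0 ≤ x) (s : Set ℝ) :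
    liminf (fun t => (∫ x in s, exp (-t * x) ∂μ) / √(∫ x, exp (-2 * t * x) ∂μ)) atTop
      ≤ √(μ.real s) := by
  refine liminf_le_of_frequently_le ?_ (isBoundedUnder_of ⟨0, fun t => ?_⟩)
  · exact ((eventually_ge_atTop 0).mono fun t ht => setIntegral_exp_div_sqrt_le h0 ht s).frequently
  · exact div_nonneg (integral_nonneg fun x => (exp_pos _).le) (sqrt_nonneg _)

theorem setIntegral_Ici_exp_mul_le {c : ℝ} (hc : c ≤ 0) (a : ℝ) :
    ∫ x in Ici a, exp (c * x) ∂μ ≤ exp (c * a) * μ.real univ := by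
  calc ∫ x in Ici a, exp (c * x) ∂μ ≤ ‖∫ x in Ici a, exp (c * x) ∂μ‖ := le_norm_self _
    _ ≤ exp (c * a) * μ.real (Ici a) :=
        norm_setIntegral_le_of_norm_le_const (measure_lt_top μ _) fun x hx => by
          rw [norm_of_nonneg (exp_pos _).le]
          exact exp_le_exp.2 (mul_le_mul_of_nonpos_left hx hc)
    _ ≤ exp (c * a) * μ.real univ :=
        mul_le_mul_of_nonneg_left (measureReal_mono (subset_univ _)) (exp_pos _).le

theorem exp_mul_mul_measureReal_Iio_le_integral (h0 : ∀ᵐ x ∂μ, 0 ≤ x) {c : ℝ} (hc : c ≤ 0)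
    (b : ℝ) : exp (c * b) * μ.real (Iio b) ≤ ∫ x, exp (c * x) ∂μ := by
  have hint := integrable_exp_mul h0 hc
  calc exp (c * b) * μ.real (Iio b) = ∫ _ in Iio b, exp (c * b) ∂μ := by
        rw [setIntegral_const, smul_eq_mul, mul_comm]
    _ ≤ ∫ x in Iio b, exp (c * x) ∂μ :=
        setIntegral_mono_on (integrableOn_const (measure_ne_top _ _)) hint.integrableOn
          measurableSet_Iio fun x hx => exp_le_exp.2 (mul_le_mul_of_nonpos_left (le_of_lt hx) hc)
    _ ≤ ∫ x, exp (c * x) ∂μ := setIntegral_le_integral hint (ae_of_all _ fun x => (exp_pos _).le)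

theorem tendsto_setIntegral_Ici_exp_div_sqrt (h0 : ∀ᵐ x ∂μ, 0 ≤ x) {a b : ℝ} (hba : b < a)
    (hb : 0 < μ (Iio b)) :
    Tendsto (fun t => (∫ x in Ici a, exp (-t * x) ∂μ) / √(∫ x, exp (-2 * t * x) ∂μ))
      atTop (𝓝 0) := by
  have hm : 0 < μ.real (Iio b) := ENNReal.toReal_pos hb.ne' (measure_ne_top _ _)
  set K := μ.real univ / √(μ.real (Iio b)) with hK_def
  have hbound : ∀ t ≥ 0, (∫ x in Ici a, exp (-t * x) ∂μ) / √(∫ x, exp (-2 * t * x) ∂μ)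
      ≤ K * exp (-((a - b) * t)) := by
    intro t ht
    have hden : exp (-t * b) * √(μ.real (Iio b)) ≤ √(∫ x, exp (-2 * t * x) ∂μ) := by
      rw [le_sqrt' (by positivity), mul_pow, sq_sqrt hm.le, sq, ← exp_add,
        show -t * b + -t * b = -2 * t * b by ring]
      exact exp_mul_mul_measureReal_Iio_le_integral h0 (by linarith) b
    calc (∫ x in Ici a, exp (-t * x) ∂μ) / √(∫ x, exp (-2 * t * x) ∂μ)
        ≤ exp (-t * a) * μ.real univ / (exp (-t * b) * √(μ.real (Iio b))) :=
          div_le_div₀ (by positivity) (setIntegral_Ici_exp_mul_le (by linarith) a)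
            (by positivity) hden
      _ = K * exp (-((a - b) * t)) := by
          rw [show -t * a = -((a - b) * t) + -t * b by ring, exp_add, hK_def]
          field_simp
  have hK : Tendsto (fun t => K * exp (-((a - b) * t))) atTop (𝓝 0) := by
    simpa using (tendsto_exp_neg_atTop_nhds_zero.comp
      (tendsto_id.const_mul_atTop (sub_pos.2 hba))).const_mul K
  refine tendsto_of_tendsto_of_tendsto_of_le_of_le' tendsto_const_nhds hK
    (Eventually.of_forall fun t => ?_) ((eventually_ge_atTop 0).mono hbound)
  exact div_nonneg (integral_nonneg fun x => (exp_pos _).le) (sqrt_nonneg _)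

theorem tendsto_measureReal_Iio_nhdsGT_zero (hneg : μ (Iio 0) = 0) (hatom : μ {0} = 0) :
    Tendsto (fun a => μ.real (Iio a)) (𝓝[>] 0) (𝓝 0) := by
  have hIic : μ (⋂ r > (0 : ℝ), Iio r) = 0 := by
    have : ⋂ r > (0 : ℝ), Iio r = Iio 0 ∪ {0} := by
      ext x
      simp [forall_gt_iff_le, le_iff_lt_or_eq]
    rw [this, measure_union_null hneg hatom]
  have h := tendsto_measure_biInter_gt (μ := μ) (s := Iio) (a := 0)
    (fun r _ => measurableSet_Iio.nullMeasurableSet) (fun i j _ hij => Iio_subset_Iio hij)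
    ⟨1, one_pos, measure_ne_top _ _⟩
  rw [hIic] at h
  exact (ENNReal.tendsto_toReal ENNReal.zero_ne_top).comp h

theorem tendsto_integral_exp_div_sqrt (hneg : μ (Iio 0) = 0) (hatom : μ {0} = 0)
    (hsupp : ∀ b > 0, 0 < μ (Iio b)) :
    Tendsto (fun t => (∫ x, exp (-t * x) ∂μ) / √(∫ x, exp (-2 * t * x) ∂μ)) atTop (𝓝 0) := by
  have h0 := ae_nonneg_of_measure_Iio_eq_zero hneg
  refine tendsto_order.2 ⟨fun ε hε => Eventually.of_forall fun t => hε.trans_le ?_, fun ε hε => ?_⟩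
  · exact div_nonneg (integral_nonneg fun x => (exp_pos _).le) (sqrt_nonneg _)
  obtain ⟨a, hsmall, ha⟩ : ∃ a, √(μ.real (Iio a)) < ε / 2 ∧ 0 < a :=
    (((tendsto_measureReal_Iio_nhdsGT_zero hneg hatom).sqrt.eventually
      (gt_mem_nhds (by simpa using half_pos hε))).and self_mem_nhdsWithin).exists
  have htail := (tendsto_setIntegral_Ici_exp_div_sqrt h0 (half_lt_self ha)
    (hsupp _ (half_pos ha))).eventually (gt_mem_nhds (half_pos hε))
  filter_upwards [htail, eventually_ge_atTop 0] with t htail ht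
  rw [← integral_add_compl measurableSet_Iio (integrable_exp_mul h0 (by linarith : -t ≤ 0)),
    compl_Iio, add_div]
  have hhead := (setIntegral_exp_div_sqrt_le h0 ht (Iio a)).trans hsmall.le
  exact (add_lt_add_of_le_of_lt hhead htail).trans_eq (add_halves ε)

end LaplaceQuotient

theorem laplace_liminf_zero_of_no_atom_general (μ : Measure ℝ) [IsFiniteMeasure μ]
    (hsupp_nonneg : μ (Set.Iio 0) = 0)
    (hsupp_inf : ∀ ε : ℝ, 0 < ε → 0 < μ (Set.Ico 0 ε))
    (hatom : μ {0} = 0) :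
    (∀ n : ℕ, 1 ≤ n →
      Filter.liminf (fun t : ℝ =>
          (∫ x in Set.Ioo (-(1 / (n : ℝ))) (1 / (n : ℝ)), Real.exp (-t * x) ∂μ) /
            (∫ x, Real.exp (-2 * t * x) ∂μ) ^ ((1 : ℝ) / 2)) Filter.atTop
        ≤ (μ (Set.Ioo (-(1 / (n : ℝ))) (1 / (n : ℝ)))).toReal ^ ((1 : ℝ) / 2)) ∧
    Filter.liminf (fun t : ℝ =>
        (∫ x, Real.exp (-t * x) ∂μ) / (∫ x, Real.exp (-2 * t * x) ∂μ) ^ ((1 : ℝ) / 2))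
      Filter.atTop = 0 := by
  simp only [← sqrt_eq_rpow]
  refine ⟨fun n _ => liminf_setIntegral_exp_div_sqrt_le
    (ae_nonneg_of_measure_Iio_eq_zero hsupp_nonneg) _, ?_⟩
  exact (tendsto_integral_exp_div_sqrt hsupp_nonneg hatom fun b hb =>
    (hsupp_inf b hb).trans_le (measure_mono Ico_subset_Iio_self)).liminf_eq

/-- If `μ` is a finite regular Borel measure on `ℝ` with
`inf supp μ = 0` and `μ({0}) = 0`, then for every `n ≥ 1` the liminf (as `t → ∞`) of
`(∫_{(-1/n,1/n)} e^{-tx} μ(dx)) / (∫ e^{-2tx} μ(dx))^{1/2}` is at most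
`μ((-1/n,1/n))^{1/2}`, and consequently the liminf of the full quotient is `0`. -/
theorem laplace_liminf_zero_of_no_atom (μ : Measure ℝ) [IsFiniteMeasure μ] (hreg : μ.Regular)
    (hsupp_nonneg : μ (Set.Iio 0) = 0)
    (hsupp_inf : ∀ ε : ℝ, 0 < ε → 0 < μ (Set.Ico 0 ε))
    (hatom : μ {0} = 0) :
    (∀ n : ℕ, 1 ≤ n →
      Filter.liminf (fun t : ℝ =>
          (∫ x in Set.Ioo (-(1 / (n : ℝ))) (1 / (n : ℝ)), Real.exp (-t * x) ∂μ) /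
            (∫ x, Real.exp (-2 * t * x) ∂μ) ^ ((1 : ℝ) / 2)) Filter.atTop
        ≤ (μ (Set.Ioo (-(1 / (n : ℝ))) (1 / (n : ℝ)))).toReal ^ ((1 : ℝ) / 2)) ∧
    Filter.liminf (fun t : ℝ =>
        (∫ x, Real.exp (-t * x) ∂μ) / (∫ x, Real.exp (-2 * t * x) ∂μ) ^ ((1 : ℝ) / 2))
      Filter.atTop = 0 :=
  laplace_liminf_zero_of_no_atom_general μ hsupp_nonneg hsupp_inf hatom
end

section
/- Let H be a self-adjoint operator bounded below on ℋ = L²(X, dm) with spectral measure μ_ψ associated to ψ. If for some ψ ≥ 0 the liminf as t → ∞ of ⟨ψ, e^{-tH}ψ⟩/⟨ψ, e^{-2tH}ψ⟩^{1/2} is strictly positive, then E_ψ := inf supp μ_ψ is an eigenvalue of H, and P_{E_ψ}ψ ≠ 0 where P_{E_ψ} is the spectral projection onto {E_ψ}. -/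
/-!
By Cauchy–Schwarz, the part of `∫ e^{-tx} dν` coming from `x < a` is at most
`√(ν (-∞, a)) · (∫ e^{-2tx} dν)^{1/2}`, while the part coming from `x ≥ a` is `O(e^{-ta})`, which
is negligible against `(∫ e^{-2tx} dν)^{1/2} ≥ e^{-tb} √(ν (-∞, b))` for any `b < a`. So the
liminf of the ratio is at most `√(ν (-∞, a))` for every `a > Eψ`, and letting `a ↓ Eψ` it is at
most `√(ν {Eψ})`, because `ν` puts no mass below the infimum of its support.
-/

open MeasureTheory Filter Set Topology
open scoped RealInnerProductSpace

namespace MeasureTheory.Measure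

variable {ν : Measure ℝ}

theorem support_eq_setOf_Ioo (ν : Measure ℝ) :
    ν.support = {x | ∀ ε : ℝ, 0 < ε → 0 < ν (Ioo (x - ε) (x + ε))} := by
  ext x
  simp [Metric.nhds_basis_ball.mem_measureSupport, Real.ball_eq_Ioo]

theorem bddBelow_support {b : ℝ} (hb : ν (Iio b) = 0) : BddBelow ν.support :=
  ⟨b, support_subset_of_isClosed (t := Ici b) isClosed_Ici (by rwa [mem_ae_iff, compl_Ici])⟩

theorem measure_Iio_sInf_support (h : BddBelow ν.support) : ν (Iio (sInf ν.support)) = 0 :=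
  measure_mono_null (fun _ hx hxs => (csInf_le h hxs).not_gt hx) measure_compl_support

theorem measure_Iio_pos_of_sInf_support_lt (hν : ν ≠ 0) {b : ℝ} (hb : sInf ν.support < b) :
    0 < ν (Iio b) := by
  obtain ⟨x, hx, hxb⟩ := exists_lt_of_csInf_lt (nonempty_support hν) hb
  exact (mem_support_iff_forall x).1 hx _ (Iio_mem_nhds hxb)

theorem measure_Iic_sInf_support (h : BddBelow ν.support) :
    ν (Iic (sInf ν.support)) = ν {sInf ν.support} := by
  rw [← Iio_union_right]
  exact measure_congr
    (union_ae_eq_right_of_ae_eq_empty (ae_eq_empty.2 (measure_Iio_sInf_support h)))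

end MeasureTheory.Measure

theorem tendsto_measure_Iio_nhdsGT {α : Type*} [LinearOrder α] [TopologicalSpace α]
    [OrderTopology α] [FirstCountableTopology α] [DenselyOrdered α] [NoMaxOrder α]
    [MeasurableSpace α] [OpensMeasurableSpace α] (μ : Measure α) [IsFiniteMeasure μ] (a : α) :
    Tendsto (fun r => μ (Iio r)) (𝓝[>] a) (𝓝 (μ (Iic a))) := by
  have hInter : ⋂ r > a, Iio r = Iic a := by
    ext x
    simp only [mem_iInter, mem_Iio, mem_Iic]
    exact ⟨fun h => le_of_forall_gt h, fun hx r hr => hx.trans_lt hr⟩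
  rw [← hInter]
  exact tendsto_measure_biInter_gt (fun r _ => measurableSet_Iio.nullMeasurableSet)
    (fun _ _ _ hij => Iio_subset_Iio hij) (by simpa using exists_gt a)

noncomputable def laplaceTransform (ν : Measure ℝ) (t : ℝ) : ℝ := ∫ x, Real.exp (-t * x) ∂ν

theorem laplaceTransform_nonneg (ν : Measure ℝ) (t : ℝ) : 0 ≤ laplaceTransform ν t :=
  integral_nonneg fun _ => (Real.exp_pos _).le

section LaplaceTransform

variable {ν : Measure ℝ} {c t : ℝ}

theorem antitone_exp_neg_mul (ht : 0 ≤ t) : Antitone fun x => Real.exp (-t * x) :=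
  fun _ _ hxy => Real.exp_le_exp.2 (by nlinarith)

theorem ae_exp_neg_mul_le (hc : ν (Iio c) = 0) (ht : 0 ≤ t) :
    ∀ᵐ x ∂ν, ‖Real.exp (-t * x)‖ ≤ Real.exp (-t * c) := by
  have hae : ∀ᵐ x ∂ν, c ≤ x := by
    rw [ae_iff]; simp only [not_le]; exact hc
  filter_upwards [hae] with x hx
  rw [Real.norm_of_nonneg (Real.exp_pos _).le]
  exact antitone_exp_neg_mul ht hx

variable [IsFiniteMeasure ν]

theorem integrable_exp_neg_mul (hc : ν (Iio c) = 0) (ht : 0 ≤ t) :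
    Integrable (fun x => Real.exp (-t * x)) ν :=
  .of_bound (by fun_prop) _ (ae_exp_neg_mul_le hc ht)

theorem exp_mul_measureReal_Iio_le_laplaceTransform (hc : ν (Iio c) = 0) (ht : 0 ≤ t) (a : ℝ) :
    Real.exp (-t * a) * ν.real (Iio a) ≤ laplaceTransform ν t :=
  calc Real.exp (-t * a) * ν.real (Iio a)
      ≤ ∫ x in Iio a, Real.exp (-t * x) ∂ν :=
        setIntegral_ge_of_const_le_real measurableSet_Iio (measure_ne_top _ _)
          (fun _ hx => antitone_exp_neg_mul ht (le_of_lt hx))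
          (integrable_exp_neg_mul hc ht).integrableOn
    _ ≤ laplaceTransform ν t :=
        setIntegral_le_integral (integrable_exp_neg_mul hc ht)
          (.of_forall fun _ => (Real.exp_pos _).le)

theorem setIntegral_Iio_exp_neg_mul_le (hc : ν (Iio c) = 0) (ht : 0 ≤ t) (a : ℝ) :
    ∫ x in Iio a, Real.exp (-t * x) ∂ν ≤ √(ν.real (Iio a)) * √(laplaceTransform ν (2 * t)) := by
  have hLp : MemLp (fun x => Real.exp (-t * x)) (ENNReal.ofReal 2) (ν.restrict (Iio a)) :=
    .of_bound (by fun_prop) _ (ae_restrict_of_ae (ae_exp_neg_mul_le hc ht))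
  have hCS := integral_mul_le_Lp_mul_Lq_of_nonneg (μ := ν.restrict (Iio a))
    Real.HolderConjugate.two_two (.of_forall fun _ => zero_le_one)
    (.of_forall fun x => (Real.exp_pos (-t * x)).le) (memLp_const 1) hLp
  have hsq : ∀ x, Real.exp (-t * x) ^ (2 : ℝ) = Real.exp (-(2 * t) * x) := fun x => by
    rw [Real.rpow_two, ← Real.exp_nat_mul]; ring_nf
  simp only [one_mul, Real.one_rpow, integral_const, smul_eq_mul, mul_one, hsq,
    measureReal_restrict_apply_univ, ← Real.sqrt_eq_rpow] at hCS
  refine hCS.trans (mul_le_mul_of_nonneg_left (Real.sqrt_le_sqrt ?_) (Real.sqrt_nonneg _))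
  exact setIntegral_le_integral (integrable_exp_neg_mul hc (by linarith))
    (.of_forall fun _ => (Real.exp_pos _).le)

theorem setIntegral_Ici_exp_neg_mul_le (ht : 0 ≤ t) (a : ℝ) :
    ∫ x in Ici a, Real.exp (-t * x) ∂ν ≤ Real.exp (-t * a) * ν.real univ :=
  calc ∫ x in Ici a, Real.exp (-t * x) ∂ν
      ≤ ‖∫ x in Ici a, Real.exp (-t * x) ∂ν‖ := Real.le_norm_self _
    _ ≤ Real.exp (-t * a) * ν.real (Ici a) :=
        norm_setIntegral_le_of_norm_le_const (measure_lt_top _ _) fun x hx => by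
          rw [Real.norm_of_nonneg (Real.exp_pos _).le]
          exact antitone_exp_neg_mul ht hx
    _ ≤ Real.exp (-t * a) * ν.real univ :=
        mul_le_mul_of_nonneg_left (measureReal_mono (subset_univ _)) (Real.exp_pos _).le

theorem exp_mul_sqrt_measureReal_Iio_le_sqrt_laplaceTransform (hc : ν (Iio c) = 0) (ht : 0 ≤ t)
    (b : ℝ) : Real.exp (-t * b) * √(ν.real (Iio b)) ≤ √(laplaceTransform ν (2 * t)) := by
  have hexp : Real.exp (-t * b) = √(Real.exp (-(2 * t) * b)) := by
    rw [← Real.sqrt_sq (Real.exp_pos _).le, ← Real.exp_nat_mul]; ring_nf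
  rw [hexp, ← Real.sqrt_mul (Real.exp_pos _).le]
  exact Real.sqrt_le_sqrt (exp_mul_measureReal_Iio_le_laplaceTransform hc (by linarith) b)

theorem laplaceTransform_div_sqrt_le (hc : ν (Iio c) = 0) (ht : 0 ≤ t) (a : ℝ) {b : ℝ}
    (hb : 0 < ν (Iio b)) :
    laplaceTransform ν t / √(laplaceTransform ν (2 * t))
      ≤ √(ν.real (Iio a)) + Real.exp (-(a - b) * t) * (ν.real univ / √(ν.real (Iio b))) := by
  set D := √(laplaceTransform ν (2 * t))
  have hq : 0 < √(ν.real (Iio b)) :=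
    Real.sqrt_pos.2 (ENNReal.toReal_pos hb.ne' (measure_ne_top _ _))
  have hlow := exp_mul_sqrt_measureReal_Iio_le_sqrt_laplaceTransform hc ht b
  have hD : 0 < D := (mul_pos (Real.exp_pos _) hq).trans_le hlow
  have hsplit : laplaceTransform ν t
      = (∫ x in Iio a, Real.exp (-t * x) ∂ν) + ∫ x in Ici a, Real.exp (-t * x) ∂ν := by
    rw [laplaceTransform, ← integral_add_compl measurableSet_Iio (integrable_exp_neg_mul hc ht),
      compl_Iio]
  have hF : laplaceTransform ν t ≤ √(ν.real (Iio a)) * D + Real.exp (-t * a) * ν.real univ :=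
    hsplit ▸ add_le_add (setIntegral_Iio_exp_neg_mul_le hc ht a)
      (setIntegral_Ici_exp_neg_mul_le ht a)
  have hexp : Real.exp (-(a - b) * t) = Real.exp (-t * a) / Real.exp (-t * b) := by
    rw [← Real.exp_sub]; ring_nf
  calc laplaceTransform ν t / D
      ≤ √(ν.real (Iio a)) + Real.exp (-t * a) * ν.real univ / D := by
        rw [div_le_iff₀ hD, add_mul, div_mul_cancel₀ _ hD.ne']
        exact hF
    _ ≤ √(ν.real (Iio a))
          + Real.exp (-t * a) * ν.real univ / (Real.exp (-t * b) * √(ν.real (Iio b))) := by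
        gcongr
    _ = _ := by rw [hexp]; field_simp

theorem liminf_laplaceTransform_div_sqrt_le (hc : ν (Iio c) = 0) {a b : ℝ} (hba : b < a)
    (hb : 0 < ν (Iio b)) :
    liminf (fun t => laplaceTransform ν t / √(laplaceTransform ν (2 * t))) atTop
      ≤ √(ν.real (Iio a)) := by
  set bound := fun t =>
    √(ν.real (Iio a)) + Real.exp (-(a - b) * t) * (ν.real univ / √(ν.real (Iio b)))
  have hbound : Tendsto bound atTop (𝓝 (√(ν.real (Iio a)))) := by
    have hexp : Tendsto (fun t => Real.exp (-(a - b) * t)) atTop (𝓝 0) := by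
      simpa only [neg_mul, Function.comp_def, id] using Real.tendsto_exp_neg_atTop_nhds_zero.comp
        (tendsto_id.const_mul_atTop (sub_pos.2 hba))
    simpa only [zero_mul, add_zero] using (hexp.mul_const _).const_add (√(ν.real (Iio a)))
  calc liminf (fun t => laplaceTransform ν t / √(laplaceTransform ν (2 * t))) atTop
      ≤ liminf bound atTop :=
        liminf_le_liminf
          (eventually_ge_atTop 0 |>.mono fun t ht => laplaceTransform_div_sqrt_le hc ht a hb)
          (isBoundedUnder_of_eventually_ge (.of_forall fun t =>
            div_nonneg (laplaceTransform_nonneg ν t) (Real.sqrt_nonneg _)))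
          hbound.isBoundedUnder_le.isCoboundedUnder_flip
    _ = √(ν.real (Iio a)) := hbound.liminf_eq

end LaplaceTransform

theorem spectral_infimum_is_eigenvalue_general
    {E : Type*} [NormedAddCommGroup E] [InnerProductSpace ℝ E]
    (S : ℝ → (E →L[ℝ] E)) (ψ : E)
    (ν : Measure ℝ) [IsFiniteMeasure ν]
    (hpair : ∀ t : ℝ, 0 ≤ t → ⟪ψ, S t ψ⟫ = ∫ x, Real.exp (-t * x) ∂ν)
    (hbdd : ∃ b : ℝ, ν (Set.Iio b) = 0)
    (Eψ : ℝ)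
    (hEψ : Eψ = sInf {x : ℝ | ∀ ε : ℝ, 0 < ε → 0 < ν (Set.Ioo (x - ε) (x + ε))})
    (Pproj : E →L[ℝ] E)
    (hPnorm : ‖Pproj ψ‖ ^ 2 = (ν {Eψ}).toReal)
    (hPeig : ∀ φ : E, ∀ t : ℝ, 0 ≤ t → S t (Pproj φ) = Real.exp (-t * Eψ) • Pproj φ)
    (hliminf : 0 < liminf (fun t : ℝ =>
      ⟪ψ, S t ψ⟫ / ⟪ψ, S (2 * t) ψ⟫ ^ ((1 : ℝ) / 2)) atTop) :
    0 < ν {Eψ} ∧ Pproj ψ ≠ 0 ∧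
      ∃ φ : E, φ ≠ 0 ∧ ∀ t : ℝ, 0 ≤ t → S t φ = Real.exp (-t * Eψ) • φ := by
  obtain ⟨c, hc⟩ := hbdd
  rw [← Measure.support_eq_setOf_Ioo] at hEψ
  have hbdd := Measure.bddBelow_support hc
  set L := liminf (fun t => laplaceTransform ν t / √(laplaceTransform ν (2 * t))) atTop
  have hL : 0 < L := by
    refine hliminf.trans_eq (liminf_congr <| (eventually_ge_atTop 0).mono fun t ht => ?_)
    rw [hpair t ht, hpair (2 * t) (by linarith), Real.sqrt_eq_rpow]
    rfl
  have hν : ν ≠ 0 := by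
    rintro rfl
    simp [L, laplaceTransform] at hL
  have hL_le : ∀ r > Eψ, L ≤ √(ν.real (Iio r)) := fun r hr => by
    obtain ⟨b, hEb, hbr⟩ := exists_between hr
    exact liminf_laplaceTransform_div_sqrt_le hc hbr
      (Measure.measure_Iio_pos_of_sInf_support_lt hν (hEψ ▸ hEb))
  have hIic : 0 < ν.real (Iic Eψ) := by
    have hlim : Tendsto (fun r => √(ν.real (Iio r))) (𝓝[>] Eψ) (𝓝 √(ν.real (Iic Eψ))) :=
      ((ENNReal.tendsto_toReal (measure_ne_top _ _)).comp (tendsto_measure_Iio_nhdsGT ν Eψ)).sqrt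
    exact Real.sqrt_pos.1 (hL.trans_le (ge_of_tendsto hlim (eventually_nhdsWithin_of_forall hL_le)))
  have hatom : ν (Iic Eψ) = ν {Eψ} := hEψ ▸ Measure.measure_Iic_sInf_support hbdd
  rw [measureReal_def, hatom] at hIic
  have hP : Pproj ψ ≠ 0 := fun h => by
    rw [h, norm_zero, zero_pow two_ne_zero] at hPnorm
    exact hIic.ne hPnorm
  exact ⟨(ENNReal.toReal_pos_iff.1 hIic).1, hP, Pproj ψ, hP, hPeig ψ⟩

/-- Let `H` be self-adjoint and bounded below on a Hilbert space,
with semigroup `S t = e^{-tH}` and spectral measure `ν = μ_ψ` of `ψ`, so that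
`⟪ψ, S t ψ⟫ = ∫ e^{-tx} dν` and the support of `ν` is bounded below with infimum
`Eψ`.  Let `P` be the spectral projection onto `{Eψ}`, so `‖Pψ‖² = ν({Eψ})` and
`S t (P φ) = e^{-t Eψ} P φ`.  If
`liminf_{t→∞} ⟪ψ, S t ψ⟫/⟪ψ, S(2t)ψ⟫^{1/2} > 0`, then `ν({Eψ}) > 0`, hence
`P ψ ≠ 0` and `Eψ` is an eigenvalue of `H` (there is a nonzero `φ` with
`S t φ = e^{-t Eψ} φ`). -/
theorem spectral_infimum_is_eigenvalue
    {E : Type*} [NormedAddCommGroup E] [InnerProductSpace ℝ E] [CompleteSpace E]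
    (S : ℝ → (E →L[ℝ] E)) (ψ : E) (hψ : ψ ≠ 0)
    (ν : Measure ℝ) [IsFiniteMeasure ν] (hνreg : ν.Regular)
    (hpair : ∀ t : ℝ, 0 ≤ t → ⟪ψ, S t ψ⟫ = ∫ x, Real.exp (-t * x) ∂ν)
    (hbdd : ∃ b : ℝ, ν (Set.Iio b) = 0)
    (Eψ : ℝ)
    (hEψ : Eψ = sInf {x : ℝ | ∀ ε : ℝ, 0 < ε → 0 < ν (Set.Ioo (x - ε) (x + ε))})
    (Pproj : E →L[ℝ] E)
    (hPnorm : ‖Pproj ψ‖ ^ 2 = (ν {Eψ}).toReal)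
    (hPeig : ∀ φ : E, ∀ t : ℝ, 0 ≤ t → S t (Pproj φ) = Real.exp (-t * Eψ) • Pproj φ)
    (hliminf : 0 < liminf (fun t : ℝ =>
      ⟪ψ, S t ψ⟫ / ⟪ψ, S (2 * t) ψ⟫ ^ ((1 : ℝ) / 2)) atTop) :
    0 < ν {Eψ} ∧ Pproj ψ ≠ 0 ∧
      ∃ φ : E, φ ≠ 0 ∧ ∀ t : ℝ, 0 ≤ t → S t φ = Real.exp (-t * Eψ) • φ :=
  spectral_infimum_is_eigenvalue_general S ψ ν hpair hbdd Eψ hEψ Pproj hPnorm hPeig hliminf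
end
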